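/- Let F : C → D be a homotopy functor between model categories among non-negatively graded chain complexes, unbounded chain complexes, and algebras over a reduced operad, and suppose F is reduced (F(0) ≃ 0). Then T₁F(X) ≃ Ω F(Σ X), where T₁F(X) is the homotopy limit of F(X * {1}) → F(X * {1,2}) ← F(X * {1}), X * T denotes the homotopy cofiber of the fold map ∐_T X → X, and consequently P₁F(X) ≃ hocolim_{p→∞} Ωᵖ F(Σᵖ X). -/

import Mathlib

/-!
The cone `X * {1} = cone(𝟙 X)` is contractible, so a reduced homotopy functor sends it to an
acyclic complex. The homotopy pullback `T₁F(X)` is the desuspended cone of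
`F(cX) ⊕ F(cX) ⟶ F(ΣX)`, a map with acyclic source; hence `F(ΣX)` includes
quasi-isomorphically into that cone, and desuspending gives `T₁F(X) ≃ Ω F(ΣX)`.
-/

open CategoryTheory Limits HomologicalComplex ZeroObject CochainComplex CochainComplex.HomComplex

noncomputable section

namespace GoodwillieLinear

variable (k : Type) [Field k]

/-- Unbounded (cohomologically `ℤ`-indexed) chain complexes of `k`-vector spaces. -/
abbrev Ch := CochainComplex (ModuleCat.{0} k) ℤ

instance : HasFiniteBiproducts (Ch k) := HasFiniteBiproducts.of_hasFiniteProducts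

variable {k}

/-- Two complexes are weakly equivalent if they are connected by a roof of
quasi-isomorphisms. -/
def WeaklyEquivalent (A B : Ch k) : Prop :=
  ∃ (W : Ch k) (f : W ⟶ A) (g : W ⟶ B), QuasiIso f ∧ QuasiIso g

/-- A commutative square in `Ch` is homotopy coCartesian if the comparison map
`cone(A → B ⊕ C) ⟶ D` is a quasi-isomorphism.  (Since `Ch` is a stable
category—fiber and cofiber sequences agree up to shift—this same condition also
characterizes homotopy Cartesian squares.) -/
def IsHCocartSq {A B C D : Ch k} (f : A ⟶ B) (g : A ⟶ C) (u : B ⟶ D) (v : C ⟶ D)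
    (w : f ≫ u = g ≫ v) : Prop :=
  QuasiIso
    (CochainComplex.mappingCone.desc (biprod.lift f g) 0 (biprod.desc u (-v))
      (by
        rw [δ_zero]
        have : biprod.lift f g ≫ biprod.desc u (-v) = 0 := by
          rw [biprod.lift_desc, Preadditive.comp_neg, w, add_neg_cancel]
        rw [this, Cochain.ofHom_zero]))

/-- Homotopy Cartesian squares in the stable category `Ch` (see `IsHCocartSq`). -/
def IsHCartSq {A B C D : Ch k} (f : A ⟶ B) (g : A ⟶ C) (u : B ⟶ D) (v : C ⟶ D)
    (w : f ≫ u = g ≫ v) : Prop :=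
  IsHCocartSq f g u v w

/-- A homotopy functor of several variables indexed by `Fin r`. -/
def IsHomotopyFunctorPi {r : ℕ} (L : (∀ _ : Fin r, Ch k) ⥤ Ch k) : Prop :=
  ∀ ⦃A B : ∀ _ : Fin r, Ch k⦄ (f : A ⟶ B), (∀ i, QuasiIso (f i)) → QuasiIso (L.map f)

/-- The morphism of families which is `φ` in slot `i` and the identity elsewhere. -/
def piUpdateHom {r : ℕ} (X : Fin r → Ch k) (i : Fin r) {A B : Ch k} (φ : A ⟶ B) :
    (Function.update X i A) ⟶ (Function.update X i B) := fun j =>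
  if h : j = i then
    eqToHom (by subst h; simp) ≫ φ ≫ eqToHom (by subst h; simp)
  else
    eqToHom (by rw [Function.update_of_ne h, Function.update_of_ne h])

lemma piUpdateHom_comp {r : ℕ} (X : Fin r → Ch k) (i : Fin r) {A B C : Ch k}
    (φ : A ⟶ B) (ψ : B ⟶ C) :
    piUpdateHom X i φ ≫ piUpdateHom X i ψ = piUpdateHom X i (φ ≫ ψ) := by
  funext j
  show piUpdateHom X i φ j ≫ piUpdateHom X i ψ j = piUpdateHom X i (φ ≫ ψ) j
  by_cases h : j = i
  · subst h; simp [piUpdateHom]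
  · simp [piUpdateHom, h]

/-- `L` is reduced in slot `i`: substituting `0` in the `i`-th slot yields an acyclic
complex, whatever the other entries are. -/
def ReducedInSlot {r : ℕ} (L : (∀ _ : Fin r, Ch k) ⥤ Ch k) (i : Fin r) : Prop :=
  ∀ (X : Fin r → Ch k) (d : ℤ), (L.obj (Function.update X i 0)).ExactAt d

/-- `L` is linear (`1`-excisive) in slot `i`: with the other entries fixed, it sends
homotopy pushout squares in the `i`-th slot to homotopy pullback squares. -/
def LinearInSlot {r : ℕ} (L : (∀ _ : Fin r, Ch k) ⥤ Ch k) (i : Fin r) : Prop :=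
  ∀ (X : Fin r → Ch k) ⦃A B C D : Ch k⦄ (f : A ⟶ B) (g : A ⟶ C) (u : B ⟶ D) (v : C ⟶ D)
    (w : f ≫ u = g ≫ v) (hw : IsHCocartSq f g u v w),
    IsHCartSq (L.map (piUpdateHom X i f)) (L.map (piUpdateHom X i g))
      (L.map (piUpdateHom X i u)) (L.map (piUpdateHom X i v))
      (by rw [← L.map_comp, ← L.map_comp, piUpdateHom_comp, piUpdateHom_comp, w])

/-- An `r`-multilinear (reduced, homotopy) functor. -/
def IsMultilinear {r : ℕ} (L : (∀ _ : Fin r, Ch k) ⥤ Ch k) : Prop :=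
  IsHomotopyFunctorPi L ∧ ∀ i : Fin r, ReducedInSlot L i ∧ LinearInSlot L i

/-- The functorial map of mapping cones induced by a commuting square. -/
def coneMapOfSq {A B A' B' : Ch k} (f : A ⟶ B) (g : A' ⟶ B') (α : A ⟶ A') (β : B ⟶ B')
    (w : f ≫ β = α ≫ g) : mappingCone f ⟶ mappingCone g :=
  mappingCone.desc f ((Cochain.ofHom α).comp (mappingCone.inl g) (zero_add (-1)))
    (β ≫ mappingCone.inr g)
    (by
      rw [δ_ofHom_comp, mappingCone.δ_inl, ← Cochain.ofHom_comp, ← Category.assoc, ← w,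
        Category.assoc])

/-- The cone of `𝟙 X`: the join `X * {1}` (the cofiber of the fold map `∐_{\{1\}} X → X`,
i.e. a model of the cone `cX`). -/
def joinOne (X : Ch k) : Ch k := mappingCone (𝟙 X)

/-- The fold map `X ⊞ X ⟶ X`. -/
def fold2 (X : Ch k) : X ⊞ X ⟶ X := biprod.desc (𝟙 X) (𝟙 X)

/-- The join `X * {1,2}`: the cofiber of the fold map `X ⊕ X → X`, a model of the
suspension `Σ X`. -/
def joinTwo (X : Ch k) : Ch k := mappingCone (fold2 X)

/-- `X * {1} → X * {1,2}` induced by the inclusion `{1} ↪ {1,2}` (first copy). -/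
def joinMap₁ (X : Ch k) : joinOne X ⟶ joinTwo X :=
  coneMapOfSq (𝟙 X) (fold2 X) biprod.inl (𝟙 X) (by simp [fold2])

/-- `X * {1} → X * {1,2}` induced by the inclusion `{1} ↪ {1,2}` (second copy). -/
def joinMap₂ (X : Ch k) : joinOne X ⟶ joinTwo X :=
  coneMapOfSq (𝟙 X) (fold2 X) biprod.inr (𝟙 X) (by simp [fold2])

/-- The homotopy pullback of a cospan `A → C ← B` of complexes, modeled as the
desuspended mapping cone of `(f, -g) : A ⊕ B → C`. -/
def hoPullback {A B C : Ch k} (f : A ⟶ C) (g : B ⟶ C) : Ch k :=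
  (mappingCone (biprod.desc f (-g)))⟦(-1 : ℤ)⟧

/-- A reduced functor. -/
def IsReducedF (F : Ch k ⥤ Ch k) : Prop := ∀ i : ℤ, (F.obj 0).ExactAt i

/-- A homotopy functor. -/
def IsHomotopyF (F : Ch k ⥤ Ch k) : Prop :=
  ∀ ⦃A B : Ch k⦄ (f : A ⟶ B), QuasiIso f → QuasiIso (F.map f)

section Acyclic

variable {C : Type*} [Category C] [Abelian C]

lemma acyclic_mappingCone_id (K : CochainComplex C ℤ) : (mappingCone (𝟙 K)).Acyclic := by
  intro n
  rw [exactAt_iff_isZero_homology, IsZero.iff_id_eq_zero, ← homologyMap_id,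
    (mappingCone.homotopyToZeroOfId K).homologyMap_eq n, homologyMap_zero]

lemma acyclic_biprod {ι : Type*} {c : ComplexShape ι} {P Q : HomologicalComplex C c}
    (hP : P.Acyclic) (hQ : Q.Acyclic) : (P ⊞ Q).Acyclic :=
  (ShortComplex.Splitting.ofHasBinaryBiproduct P Q).shortExact.acyclic_X₂ hP hQ

lemma quasiIso_zero_of_acyclic {ι : Type*} {c : ComplexShape ι} {K : HomologicalComplex C c}
    (hK : K.Acyclic) : QuasiIso (0 : (0 : HomologicalComplex C c) ⟶ K) := by
  rw [quasiIso_iff]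
  intro n
  rw [quasiIsoAt_iff_exactAt _ _ (acyclic_of_isZero _ (Limits.isZero_zero _) n)]
  exact hK n

-- The rotated cone triangle `B ⟶ cone φ ⟶ A⟦1⟧ ⟶ B⟦1⟧` has acyclic third vertex.
lemma quasiIso_mappingCone_inr_of_acyclic {A B : CochainComplex C ℤ} (φ : A ⟶ B)
    (hA : A.Acyclic) : QuasiIso (mappingCone.inr φ) := by
  rw [← mem_quasiIso_iff, ← HomotopyCategory.quotient_map_mem_quasiIso_iff,
    HomotopyCategory.quasiIso_eq_trW_subcategoryAcyclic]
  exact ObjectProperty.trW.mk' _ (HomotopyCategory.mappingCone_triangleh_distinguished φ)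
    ((HomotopyCategory.quotient_obj_mem_subcategoryAcyclic_iff_acyclic A).2 hA)

end Acyclic

lemma WeaklyEquivalent.of_quasiIso {A B : Ch k} (f : B ⟶ A) (hf : QuasiIso f) :
    WeaklyEquivalent A B :=
  ⟨B, f, 𝟙 B, hf, inferInstance⟩

lemma IsHomotopyF.acyclic_obj {F : Ch k ⥤ Ch k} (hF : IsHomotopyF F) (hred : IsReducedF F)
    {K : Ch k} (hK : K.Acyclic) : (F.obj K).Acyclic := fun n =>
  have := hF _ (quasiIso_zero_of_acyclic hK)
  (exactAt_iff_of_quasiIsoAt (F.map 0) n).1 (hred n)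

theorem stmt_9 (F : Ch k ⥤ Ch k) (hh : IsHomotopyF F) (hred : IsReducedF F) (X : Ch k) :
    WeaklyEquivalent
      (hoPullback (F.map (joinMap₁ X)) (F.map (joinMap₂ X)))
      ((F.obj (joinTwo X))⟦(-1 : ℤ)⟧) := by
  have hcone : (F.obj (joinOne X)).Acyclic := hh.acyclic_obj hred (acyclic_mappingCone_id X)
  have hinr := quasiIso_mappingCone_inr_of_acyclic
    (biprod.desc (F.map (joinMap₁ X)) (-F.map (joinMap₂ X))) (acyclic_biprod hcone hcone)
  exact .of_quasiIso _ ((quasiIso_shift_iff _ (-1)).2 hinr)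

end GoodwillieLinear
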